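/- If G is a dicotic game whose game tree has height (birthday) at most n+1, then G ≤ n·↑ or G ≤ n·↑ + *. -/

import Mathlib

universe u

namespace SetTheory

/-- Pre-games, as in Mathlib before combinatorial game theory was removed from it. -/
inductive PGame : Type (u + 1)
  | mk : ∀ α β : Type u, (α → PGame) → (β → PGame) → PGame

namespace PGame

def LeftMoves : PGame → Type u
  | mk l _ _ _ => l

def RightMoves : PGame → Type u
  | mk _ r _ _ => r

def moveLeft : ∀ g : PGame, LeftMoves g → PGame
  | mk _ _ L _ => L

def moveRight : ∀ g : PGame, RightMoves g → PGame
  | mk _ _ _ R => R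

inductive IsOption : PGame → PGame → Prop
  | moveLeft {x : PGame} (i : x.LeftMoves) : IsOption (x.moveLeft i) x
  | moveRight {x : PGame} (i : x.RightMoves) : IsOption (x.moveRight i) x

theorem wf_isOption : WellFounded IsOption :=
  ⟨fun x => by
    induction x with
    | mk l r L R IHl IHr =>
      refine Acc.intro _ fun y h => ?_
      cases h with
      | moveLeft i => exact IHl i
      | moveRight j => exact IHr j⟩

instance : WellFoundedRelation PGame :=
  ⟨IsOption, wf_isOption⟩

@[simp]
theorem isOption_moveLeft (x : PGame) (i : x.LeftMoves) : IsOption (x.moveLeft i) x :=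
  IsOption.moveLeft i

@[simp]
theorem isOption_moveRight (x : PGame) (j : x.RightMoves) : IsOption (x.moveRight j) x :=
  IsOption.moveRight j

instance : Zero PGame :=
  ⟨⟨PEmpty, PEmpty, PEmpty.elim, PEmpty.elim⟩⟩

instance : One PGame :=
  ⟨⟨PUnit, PEmpty, fun _ => 0, PEmpty.elim⟩⟩

def ofLists (L R : List PGame.{u}) : PGame.{u} :=
  mk (ULift (Fin L.length)) (ULift (Fin R.length)) (fun i => L[i.down.1]) fun j => R[j.down.1]

def star : PGame.{u} :=
  ⟨PUnit, PUnit, fun _ => 0, fun _ => 0⟩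

def neg : PGame → PGame
  | ⟨l, r, L, R⟩ => ⟨r, l, fun i => neg (R i), fun i => neg (L i)⟩

instance : Neg PGame :=
  ⟨neg⟩

/-- Inner recursion of `add`: `addAux xl xr IHl IHr y` is `mk xl xr xL xR + y`,
given `IHl i = (xL i + ·)` and `IHr j = (xR j + ·)`. -/
def addAux (xl xr : Type u) (IHl : xl → PGame → PGame) (IHr : xr → PGame → PGame) :
    PGame → PGame
  | mk yl yr yL yR =>
    mk (xl ⊕ yl) (xr ⊕ yr)
      (Sum.rec (fun i => IHl i (mk yl yr yL yR)) fun j => addAux xl xr IHl IHr (yL j))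
      (Sum.rec (fun i => IHr i (mk yl yr yL yR)) fun j => addAux xl xr IHl IHr (yR j))

def add : PGame → PGame → PGame
  | mk xl xr xL xR => addAux xl xr (fun i => add (xL i)) (fun j => add (xR j))

instance : Add PGame :=
  ⟨add⟩

/-- The pair (x ≤ y, x ⧏ y), by simultaneous recursion. -/
noncomputable def leLF (x : PGame) : PGame → Prop × Prop := by
  induction x with | mk xl xr xL xR IHxl IHxr => _
  intro y
  induction y with | mk yl yr yL yR IHyl IHyr => _
  exact ((∀ i, (IHxl i (mk yl yr yL yR)).2) ∧ ∀ j, (IHyr j).2,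
    (∃ i, (IHyl i).1) ∨ ∃ j, (IHxr j (mk yl yr yL yR)).1)

noncomputable instance : LE PGame :=
  ⟨fun x y => (leLF x y).1⟩

noncomputable instance : LT PGame :=
  ⟨fun x y => x ≤ y ∧ ¬y ≤ x⟩

noncomputable def birthday : PGame.{u} → Ordinal.{u}
  | ⟨_, _, xL, xR⟩ => max (⨆ i, Order.succ (birthday (xL i))) (⨆ i, Order.succ (birthday (xR i)))

end PGame

end SetTheory
open SetTheory PGame
open scoped PGame

/-- The game up, ↑ = {0 | *}. -/
def upG : PGame := ofLists [0] [star]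

/-- The game down, ↓ = {* | 0}. -/
def downG : PGame := ofLists [star] [0]

/-- `copies n G` is the disjunctive sum of `n` copies of `G`. -/
def copies : ℕ → PGame → PGame
  | 0, _ => 0
  | n + 1, G => copies n G + G

/-- A game is dicotic (all-small) if either it has no options for either player, or
both players have at least one option and every option is dicotic. -/
def Dicotic (G : PGame) : Prop :=
  (IsEmpty G.LeftMoves ∧ IsEmpty G.RightMoves ∨
    Nonempty G.LeftMoves ∧ Nonempty G.RightMoves) ∧
    (∀ i, Dicotic (G.moveLeft i)) ∧ ∀ j, Dicotic (G.moveRight j)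
termination_by G

/-- The dicotic transformation δ: every empty option set is replaced by the single option 0. -/
def delta : PGame → PGame
  | PGame.mk l r L R =>
    PGame.mk (l ⊕ PLift (IsEmpty l)) (r ⊕ PLift (IsEmpty r))
      (Sum.rec (fun i => delta (L i)) fun _ => 0)
      (Sum.rec (fun j => delta (R j)) fun _ => 0)

/-- A game is infinitesimal if every positive multiple lies strictly between -1 and 1. -/
def Infinitesimal (G : PGame) : Prop :=
  ∀ n : ℕ, 0 < n → copies n G < 1 ∧ -1 < copies n G

/-
Induction on `n`. Every option of `G` has birthday at most `n`, so by induction it is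
`≤ (n-1)·↑` or `≤ (n-1)·↑ + *`; since `0 ⧏ ↑`, `* ⧏ ↑` and `0 ⧏ ↑ + *`, no left option of `G` is
`≥ n·↑` or `≥ n·↑ + *`. The right options of `n·↑` all equal `(n-1)·↑ + *`, and those of
`n·↑ + *` are `≥ (n-1)·↑`. Hence `G ≤ n·↑` unless `(n-1)·↑ + * ≤ G`, and `G ≤ n·↑ + *` unless
`(n-1)·↑ ≤ G`. Both cannot hold: a right option `R` of `G` with `R ≤ A` rules out `A ≤ G`, and a
dicotic `G` without right options has no options at all, while `0 ⧏ (n-1)·↑ + *`.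
-/

namespace SetTheory

namespace PGame

theorem leLF_mk {xl xr yl yr : Type u} (xL : xl → PGame.{u}) (xR : xr → PGame.{u})
    (yL : yl → PGame.{u}) (yR : yr → PGame.{u}) :
    leLF (mk xl xr xL xR) (mk yl yr yL yR) =
      ((∀ i, (leLF (xL i) (mk yl yr yL yR)).2) ∧ ∀ j, (leLF (mk xl xr xL xR) (yR j)).2,
        (∃ i, (leLF (mk xl xr xL xR) (yL i)).1) ∨ ∃ j, (leLF (xR j) (mk yl yr yL yR)).1) :=
  rfl

def LF (x y : PGame.{u}) : Prop :=
  ¬y ≤ x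

infix:50 " ⧏ " => LF

/- Both orders of the arguments are proved together: the recursive calls of `leLF` swap them. -/
theorem leLF_snd_iff_not_fst (x y : PGame.{u}) :
    ((leLF x y).2 ↔ ¬(leLF y x).1) ∧ ((leLF y x).2 ↔ ¬(leLF x y).1) := by
  induction x generalizing y with
  | mk xl xr xL xR IHxl IHxr =>
    induction y with
    | mk yl yr yL yR IHyl IHyr =>
      rw [leLF_mk xL xR yL yR, leLF_mk yL yR xL xR]
      dsimp only
      constructor <;> rw [not_and_or, not_forall, not_forall] <;>
        refine or_congr (exists_congr fun i => ?_) (exists_congr fun j => ?_)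
      · rw [(IHyl i).2, not_not]
      · rw [(IHxr j _).2, not_not]
      · rw [(IHxl i _).1, not_not]
      · rw [(IHyr j).1, not_not]

theorem lf_iff_leLF_snd (x y : PGame.{u}) : x ⧏ y ↔ (leLF x y).2 :=
  (leLF_snd_iff_not_fst x y).1.symm

theorem le_iff_forall_lf {x y : PGame.{u}} :
    x ≤ y ↔ (∀ i, x.moveLeft i ⧏ y) ∧ ∀ j, x ⧏ y.moveRight j := by
  obtain ⟨xl, xr, xL, xR⟩ := x
  obtain ⟨yl, yr, yL, yR⟩ := y
  simp only [lf_iff_leLF_snd]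
  rfl

theorem lf_iff_exists_le {x y : PGame.{u}} :
    x ⧏ y ↔ (∃ i, x ≤ y.moveLeft i) ∨ ∃ j, x.moveRight j ≤ y := by
  obtain ⟨xl, xr, xL, xR⟩ := x
  obtain ⟨yl, yr, yL, yR⟩ := y
  rw [lf_iff_leLF_snd]
  rfl

theorem lf_of_le_moveLeft {x y : PGame.{u}} {i : y.LeftMoves} (h : x ≤ y.moveLeft i) : x ⧏ y :=
  lf_iff_exists_le.2 (.inl ⟨i, h⟩)

theorem lf_of_moveRight_le {x y : PGame.{u}} {j : x.RightMoves} (h : x.moveRight j ≤ y) : x ⧏ y :=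
  lf_iff_exists_le.2 (.inr ⟨j, h⟩)

theorem moveLeft_lf_of_le {x y : PGame.{u}} (h : x ≤ y) (i : x.LeftMoves) : x.moveLeft i ⧏ y :=
  (le_iff_forall_lf.1 h).1 i

theorem lf_moveRight_of_le {x y : PGame.{u}} (h : x ≤ y) (j : y.RightMoves) :
    x ⧏ y.moveRight j :=
  (le_iff_forall_lf.1 h).2 j

protected theorem le_refl (x : PGame.{u}) : x ≤ x := by
  induction x with
  | mk xl xr xL xR IHl IHr =>
    exact le_iff_forall_lf.2
      ⟨fun i => lf_of_le_moveLeft (IHl i), fun j => lf_of_moveRight_le (IHr j)⟩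

theorem le_trans_aux {x y z : PGame.{u}}
    (h₁ : ∀ {i}, y ≤ z → z ≤ x.moveLeft i → y ≤ x.moveLeft i)
    (h₂ : ∀ {j}, z.moveRight j ≤ x → x ≤ y → z.moveRight j ≤ y) (hxy : x ≤ y) (hyz : y ≤ z) :
    x ≤ z :=
  le_iff_forall_lf.2 ⟨fun i h => moveLeft_lf_of_le hxy i (h₁ hyz h),
    fun j h => lf_moveRight_of_le hyz j (h₂ h hxy)⟩

/- The three rotations of transitivity are proved together, since the induction step for each
needs the others at smaller games. -/
theorem le_trans_rotations (x y z : PGame.{u}) :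
    (x ≤ y → y ≤ z → x ≤ z) ∧ (y ≤ z → z ≤ x → y ≤ x) ∧ (z ≤ x → x ≤ y → z ≤ y) := by
  induction x generalizing y z with
  | mk xl xr xL xR IHxl IHxr =>
    induction y generalizing z with
    | mk yl yr yL yR IHyl IHyr =>
      induction z with
      | mk zl zr zL zR IHzl IHzr =>
        exact ⟨le_trans_aux (fun {i} => (IHxl i _ _).2.1) (fun {j} => (IHzr j).2.2),
          le_trans_aux (fun {i} => (IHyl i _).2.2) (fun {j} => (IHxr j _ _).1),
          le_trans_aux (fun {i} => (IHzl i).1) (fun {j} => (IHyr j _).2.1)⟩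

noncomputable instance : Preorder PGame.{u} where
  le_refl := PGame.le_refl
  le_trans x y z := (le_trans_rotations x y z).1
  lt_iff_le_not_ge _ _ := Iff.rfl

theorem lf_of_le_of_lf {x y z : PGame.{u}} (h₁ : x ≤ y) (h₂ : y ⧏ z) : x ⧏ z :=
  fun h => h₂ (h.trans h₁)

theorem lf_of_lf_of_le {x y z : PGame.{u}} (h₁ : x ⧏ y) (h₂ : y ≤ z) : x ⧏ z :=
  fun h => h₁ (h₂.trans h)

theorem moveLeft_lf (x : PGame.{u}) (i : x.LeftMoves) : x.moveLeft i ⧏ x :=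
  lf_of_le_moveLeft le_rfl

theorem lf_moveRight (x : PGame.{u}) (j : x.RightMoves) : x ⧏ x.moveRight j :=
  lf_of_moveRight_le le_rfl

theorem le_zero_of_isEmpty_leftMoves {x : PGame.{u}} (h : IsEmpty x.LeftMoves) : x ≤ 0 :=
  le_iff_forall_lf.2 ⟨h.elim, fun j => PEmpty.elim j⟩

theorem exists_moveLeft_add {x y : PGame.{u}} {P : PGame.{u} → Prop} :
    (∃ k, P ((x + y).moveLeft k)) ↔ (∃ i, P (x.moveLeft i + y)) ∨ ∃ j, P (x + y.moveLeft j) := by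
  obtain ⟨xl, xr, xL, xR⟩ := x
  obtain ⟨yl, yr, yL, yR⟩ := y
  exact ⟨fun ⟨k, hk⟩ => k.rec (fun i hi => .inl ⟨i, hi⟩) (fun j hj => .inr ⟨j, hj⟩) hk,
    fun h => h.elim (fun ⟨i, hi⟩ => ⟨.inl i, hi⟩) fun ⟨j, hj⟩ => ⟨.inr j, hj⟩⟩

theorem exists_moveRight_add {x y : PGame.{u}} {P : PGame.{u} → Prop} :
    (∃ k, P ((x + y).moveRight k)) ↔ (∃ i, P (x.moveRight i + y)) ∨ ∃ j, P (x + y.moveRight j) := by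
  obtain ⟨xl, xr, xL, xR⟩ := x
  obtain ⟨yl, yr, yL, yR⟩ := y
  exact ⟨fun ⟨k, hk⟩ => k.rec (fun i hi => .inl ⟨i, hi⟩) (fun j hj => .inr ⟨j, hj⟩) hk,
    fun h => h.elim (fun ⟨i, hi⟩ => ⟨.inl i, hi⟩) fun ⟨j, hj⟩ => ⟨.inr j, hj⟩⟩

theorem forall_moveRight_add (P : PGame.{u} → Prop) {x y : PGame.{u}} :
    (∀ k, P ((x + y).moveRight k)) ↔ (∀ i, P (x.moveRight i + y)) ∧ ∀ j, P (x + y.moveRight j) := by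
  obtain ⟨xl, xr, xL, xR⟩ := x
  obtain ⟨yl, yr, yL, yR⟩ := y
  exact ⟨fun h => ⟨fun i => h (.inl i), fun j => h (.inr j)⟩, fun h => Sum.rec h.1 h.2⟩

/- On games `mk ..` the moves of `x + y` are definitionally `Sum`s of the moves of `x` and `y`;
the inductive proofs below destructure them directly. -/
protected theorem add_le_add_right_and_lf (x y z : PGame.{u}) :
    (x ≤ y → x + z ≤ y + z) ∧ (x ⧏ y → x + z ⧏ y + z) := by
  induction x generalizing y z with
  | mk xl xr xL xR IHxl IHxr =>
    induction y generalizing z with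
    | mk yl yr yL yR IHyl IHyr =>
      induction z with
      | mk zl zr zL zR IHzl IHzr =>
        refine ⟨fun h => le_iff_forall_lf.2 ⟨?_, ?_⟩, fun h => ?_⟩
        · rintro (i | k)
          · exact (IHxl i _ _).2 (moveLeft_lf_of_le h i)
          · exact lf_of_le_of_lf ((IHzl k).1 h)
              (moveLeft_lf (mk yl yr yL yR + mk zl zr zL zR) (Sum.inr k))
        · rintro (j | k)
          · exact (IHyr j _).2 (lf_moveRight_of_le h j)
          · exact lf_of_lf_of_le (lf_moveRight (mk xl xr xL xR + mk zl zr zL zR) (Sum.inr k))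
              ((IHzr k).1 h)
        · rcases lf_iff_exists_le.1 h with ⟨i, hi⟩ | ⟨j, hj⟩
          · exact lf_of_le_moveLeft (i := .inl i) ((IHyl i _).1 hi)
          · exact lf_of_moveRight_le (j := .inl j) ((IHxr j _ _).1 hj)

protected theorem add_le_add_right {x y : PGame.{u}} (h : x ≤ y) (z : PGame.{u}) :
    x + z ≤ y + z :=
  (PGame.add_le_add_right_and_lf x y z).1 h

protected theorem neg_le_neg_and_lf (x y : PGame.{u}) :
    (x ≤ y → -y ≤ -x) ∧ (x ⧏ y → -y ⧏ -x) := by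
  induction x generalizing y with
  | mk xl xr xL xR IHxl IHxr =>
    induction y with
    | mk yl yr yL yR IHyl IHyr =>
      refine ⟨fun h => le_iff_forall_lf.2 ⟨fun i => ?_, fun j => ?_⟩, fun h => ?_⟩
      · exact (IHyr i).2 (lf_moveRight_of_le h i)
      · exact (IHxl j _).2 (moveLeft_lf_of_le h j)
      · rcases lf_iff_exists_le.1 h with ⟨i, hi⟩ | ⟨j, hj⟩
        · exact lf_of_moveRight_le (x := -mk yl yr yL yR) (j := i) ((IHyl i).1 hi)
        · exact lf_of_le_moveLeft (y := -mk xl xr xL xR) (i := j) ((IHxr j _).1 hj)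

protected theorem neg_le_neg {x y : PGame.{u}} (h : x ≤ y) : -y ≤ -x :=
  (PGame.neg_le_neg_and_lf x y).1 h

instance setoid : Setoid PGame.{u} :=
  AntisymmRel.setoid PGame (· ≤ ·)

/- Each option of `-x + x` is answered by the mirror move in the other component. -/
protected theorem neg_add_cancel (x : PGame.{u}) : -x + x ≈ 0 := by
  induction x with
  | mk xl xr xL xR IHl IHr =>
    refine ⟨le_iff_forall_lf.2 ⟨?_, fun j => PEmpty.elim j⟩,
      le_iff_forall_lf.2 ⟨fun i => PEmpty.elim i, ?_⟩⟩
    · rintro (i | i)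
      · show -xR i + mk xl xr xL xR ⧏ 0
        exact lf_iff_exists_le.2 (.inr ((exists_moveRight_add (P := (· ≤ 0))).2
          (.inr ⟨i, (IHr i).1⟩)))
      · show -mk xl xr xL xR + xL i ⧏ 0
        exact lf_iff_exists_le.2 (.inr ((exists_moveRight_add (P := (· ≤ 0))).2
          (.inl ⟨i, (IHl i).1⟩)))
    · rintro (i | j)
      · show 0 ⧏ -xL i + mk xl xr xL xR
        exact lf_iff_exists_le.2 (.inl ((exists_moveLeft_add (P := (0 ≤ ·))).2
          (.inr ⟨i, (IHl i).2⟩)))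
      · show 0 ⧏ -mk xl xr xL xR + xR j
        exact lf_iff_exists_le.2 (.inl ((exists_moveLeft_add (P := (0 ≤ ·))).2
          (.inl ⟨j, (IHr j).2⟩)))

theorem equiv_of_equiv_moves {x y : PGame.{u}} (eL : x.LeftMoves ≃ y.LeftMoves)
    (eR : x.RightMoves ≃ y.RightMoves) (hL : ∀ i, x.moveLeft i ≈ y.moveLeft (eL i))
    (hR : ∀ j, x.moveRight j ≈ y.moveRight (eR j)) : x ≈ y := by
  refine ⟨le_iff_forall_lf.2 ⟨fun i => lf_of_le_moveLeft (hL i).1, fun j => ?_⟩,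
    le_iff_forall_lf.2 ⟨fun i => ?_, fun j => lf_of_moveRight_le (hR j).2⟩⟩
  · have h := (hR (eR.symm j)).1
    rw [Equiv.apply_symm_apply] at h
    exact lf_of_moveRight_le h
  · have h := (hL (eL.symm i)).2
    rw [Equiv.apply_symm_apply] at h
    exact lf_of_le_moveLeft h

protected theorem zero_add (x : PGame.{u}) : 0 + x ≈ x := by
  induction x with
  | mk xl xr xL xR IHl IHr =>
    refine equiv_of_equiv_moves (Equiv.emptySum PEmpty xl) (Equiv.emptySum PEmpty xr) ?_ ?_
    · rintro (i | i)
      exacts [i.elim, IHl i]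
    · rintro (j | j)
      exacts [j.elim, IHr j]

protected theorem add_comm (x y : PGame.{u}) : x + y ≈ y + x := by
  induction x generalizing y with
  | mk xl xr xL xR IHxl IHxr =>
    induction y with
    | mk yl yr yL yR IHyl IHyr =>
      refine equiv_of_equiv_moves (Equiv.sumComm xl yl) (Equiv.sumComm xr yr) ?_ ?_
      · rintro (i | i)
        exacts [IHxl i _, IHyl i]
      · rintro (j | j)
        exacts [IHxr j _, IHyr j]

protected theorem add_assoc (x y z : PGame.{u}) : x + y + z ≈ x + (y + z) := by
  induction x generalizing y z with
  | mk xl xr xL xR IHxl IHxr =>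
    induction y generalizing z with
    | mk yl yr yL yR IHyl IHyr =>
      induction z with
      | mk zl zr zL zR IHzl IHzr =>
        refine equiv_of_equiv_moves (Equiv.sumAssoc xl yl zl) (Equiv.sumAssoc xr yr zr) ?_ ?_
        · rintro ((i | i) | i)
          exacts [IHxl i _ _, IHyl i _, IHzl i]
        · rintro ((j | j) | j)
          exacts [IHxr j _ _, IHyr j _, IHzr j]

protected theorem add_le_add_left {x y : PGame.{u}} (h : x ≤ y) (z : PGame.{u}) :
    z + x ≤ z + y :=
  ((PGame.add_comm z x).1.trans (PGame.add_le_add_right h z)).trans (PGame.add_comm y z).1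

theorem add_congr {x₁ x₂ y₁ y₂ : PGame.{u}} (hx : x₁ ≈ x₂) (hy : y₁ ≈ y₂) :
    x₁ + y₁ ≈ x₂ + y₂ :=
  ⟨(PGame.add_le_add_right hx.1 _).trans (PGame.add_le_add_left hy.1 _),
    (PGame.add_le_add_right hx.2 _).trans (PGame.add_le_add_left hy.2 _)⟩

theorem birthday_moveLeft_lt {x : PGame.{u}} (i : x.LeftMoves) :
    (x.moveLeft i).birthday < x.birthday := by
  obtain ⟨xl, xr, xL, xR⟩ := x
  rw [birthday]
  exact lt_max_of_lt_left
    ((Order.lt_succ _).trans_le (Ordinal.le_iSup _ i))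

theorem birthday_moveRight_lt {x : PGame.{u}} (j : x.RightMoves) :
    (x.moveRight j).birthday < x.birthday := by
  obtain ⟨xl, xr, xL, xR⟩ := x
  rw [birthday]
  exact lt_max_of_lt_right
    ((Order.lt_succ _).trans_le (Ordinal.le_iSup _ j))

theorem le_zero_of_birthday_lt_one {x : PGame.{u}} (h : x.birthday < 1) : x ≤ 0 := by
  rw [Order.lt_one_iff] at h
  exact le_zero_of_isEmpty_leftMoves
    ⟨fun i => (h ▸ birthday_moveLeft_lt i).not_ge zero_le⟩

protected theorem neg_zero : -(0 : PGame.{u}) = 0 := by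
  show mk PEmpty PEmpty _ _ = mk PEmpty PEmpty _ _
  congr <;> funext i <;> exact i.elim

theorem neg_star : -star.{u} = star := by
  show mk PUnit PUnit (fun _ => -0) (fun _ => -0) = star
  rw [PGame.neg_zero]
  rfl

theorem zero_lf_star : (0 : PGame.{u}) ⧏ star :=
  lf_of_le_moveLeft (i := PUnit.unit) le_rfl

theorem upG_moveRight (j : upG.{u}.RightMoves) : upG.moveRight j = star := by
  obtain ⟨⟨k, hk⟩⟩ := j
  obtain rfl : k = 0 := by simpa using hk
  rfl

theorem zero_le_upG : (0 : PGame.{u}) ≤ upG :=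
  le_iff_forall_lf.2 ⟨fun i => PEmpty.elim i, fun j => upG_moveRight j ▸ zero_lf_star⟩

theorem zero_lf_upG : (0 : PGame.{u}) ⧏ upG :=
  lf_of_le_moveLeft (i := ⟨0⟩) le_rfl

theorem star_lf_upG : star.{u} ⧏ upG :=
  lf_of_moveRight_le (j := PUnit.unit) zero_le_upG

end PGame

abbrev Game : Type (u + 1) :=
  Quotient PGame.setoid.{u}

namespace Game

instance : Zero Game.{u} := ⟨⟦0⟧⟩

instance : Add Game.{u} :=
  ⟨Quotient.map₂ (· + ·) fun _ _ hx _ _ hy => add_congr hx hy⟩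

instance : Neg Game.{u} :=
  ⟨Quotient.map Neg.neg fun _ _ h => ⟨PGame.neg_le_neg h.2, PGame.neg_le_neg h.1⟩⟩

instance : AddCommGroup Game.{u} where
  add_assoc := by rintro ⟨x⟩ ⟨y⟩ ⟨z⟩; exact Quotient.sound (PGame.add_assoc x y z)
  zero_add := by rintro ⟨x⟩; exact Quotient.sound (PGame.zero_add x)
  add_zero := by
    rintro ⟨x⟩; exact Quotient.sound (Setoid.trans (PGame.add_comm x 0) (PGame.zero_add x))
  add_comm := by rintro ⟨x⟩ ⟨y⟩; exact Quotient.sound (PGame.add_comm x y)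
  neg_add_cancel := by rintro ⟨x⟩; exact Quotient.sound (PGame.neg_add_cancel x)
  nsmul := nsmulRec
  zsmul := zsmulRec

/- Declared explicitly so that it shadows Mathlib's generic preorder on quotients, whose `≤` is not
definitionally that of the representatives. -/
noncomputable instance : LE Game.{u} :=
  ⟨Quotient.lift₂ (· ≤ ·) fun _ _ _ _ hx hy =>
    propext ⟨fun h => hx.2.trans (h.trans hy.1), fun h => hx.1.trans (h.trans hy.2)⟩⟩

noncomputable instance : Preorder Game.{u} where
  lt a b := a ≤ b ∧ ¬b ≤ a
  lt_iff_le_not_ge _ _ := Iff.rfl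
  le_refl := by rintro ⟨x⟩; exact le_refl x
  le_trans := by rintro ⟨x⟩ ⟨y⟩ ⟨z⟩; exact le_trans (α := PGame)

theorem mk_le_mk {x y : PGame.{u}} : (⟦x⟧ : Game) ≤ ⟦y⟧ ↔ x ≤ y :=
  Iff.rfl

instance : IsOrderedAddMonoid Game.{u} where
  add_le_add_left := by rintro ⟨x⟩ ⟨y⟩ h ⟨z⟩; exact PGame.add_le_add_right (mk_le_mk.1 h) z

theorem mk_add (x y : PGame.{u}) : (⟦x + y⟧ : Game) = ⟦x⟧ + ⟦y⟧ :=
  rfl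

theorem mk_neg (x : PGame.{u}) : (⟦-x⟧ : Game) = -⟦x⟧ :=
  rfl

theorem mk_copies (n : ℕ) (x : PGame.{u}) : (⟦copies n x⟧ : Game) = n • ⟦x⟧ := by
  induction n with
  | zero => exact (zero_nsmul _).symm
  | succ n ih => rw [succ_nsmul, ← ih]; rfl

theorem star_add_star : (⟦star⟧ : Game.{u}) + ⟦star⟧ = 0 := by
  rw [← neg_add_cancel (⟦star⟧ : Game), ← mk_neg, neg_star]

theorem zero_le_up : (0 : Game.{u}) ≤ ⟦upG⟧ :=
  zero_le_upG

theorem not_up_le_zero : ¬(⟦upG⟧ : Game.{u}) ≤ 0 :=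
  zero_lf_upG

theorem not_up_le_star : ¬(⟦upG⟧ : Game.{u}) ≤ ⟦star⟧ :=
  star_lf_upG

theorem not_star_le_zero : ¬(⟦star⟧ : Game.{u}) ≤ 0 :=
  zero_lf_star

theorem not_up_add_star_le_zero : ¬(⟦upG⟧ : Game.{u}) + ⟦star⟧ ≤ 0 := fun h =>
  not_up_le_star <| calc
    ⟦upG⟧ = ⟦upG⟧ + ⟦star⟧ + ⟦star⟧ := by rw [add_assoc, star_add_star, add_zero]
    _ ≤ (0 : Game) + ⟦PGame.star⟧ := by gcongr
    _ = ⟦PGame.star⟧ := zero_add _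

theorem not_nsmul_up_add_star_le_zero (n : ℕ) : ¬n • (⟦upG⟧ : Game.{u}) + ⟦star⟧ ≤ 0 := fun h =>
  not_star_le_zero ((le_add_of_nonneg_left (nsmul_nonneg zero_le_up n)).trans h)

theorem mk_copies_succ_upG_moveRight (n : ℕ) :
    ∀ j, (⟦(copies (n + 1) upG.{u}).moveRight j⟧ : Game) = n • ⟦upG⟧ + ⟦star⟧ := by
  induction n with
  | zero =>
    exact (forall_moveRight_add fun x => (⟦x⟧ : Game) = (0 : ℕ) • ⟦upG⟧ + ⟦star⟧).2
      ⟨fun i => PEmpty.elim i, fun j => by rw [upG_moveRight, mk_add, mk_copies]⟩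
  | succ m ih =>
    refine (forall_moveRight_add fun x => (⟦x⟧ : Game) = (m + 1) • ⟦upG⟧ + ⟦star⟧).2
      ⟨fun i => ?_, fun j => by rw [upG_moveRight, mk_add, mk_copies]⟩
    rw [mk_add, ih i, succ_nsmul]
    abel

end Game
end SetTheory

theorem Dicotic.moveLeft {G : PGame} (h : Dicotic G) (i : G.LeftMoves) :
    Dicotic (G.moveLeft i) := by
  rw [Dicotic] at h
  exact h.2.1 i

theorem Dicotic.moveRight {G : PGame} (h : Dicotic G) (j : G.RightMoves) :
    Dicotic (G.moveRight j) := by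
  rw [Dicotic] at h
  exact h.2.2 j

theorem Dicotic.nonempty_rightMoves {G : PGame} (h : Dicotic G) (i : G.LeftMoves) :
    Nonempty G.RightMoves := by
  rw [Dicotic] at h
  exact h.1.resolve_left (fun h' => h'.1.elim i) |>.2

def UpBounded (n : ℕ) (G : PGame) : Prop :=
  G ≤ copies n upG ∨ G ≤ copies n upG + star

theorem upBounded_zero_of_birthday_le_one {G : PGame} (hG : Dicotic G) (hb : G.birthday ≤ 1) : UpBounded 0 G := by
  have hopt {x : PGame} (h : x.birthday < G.birthday) : x ≤ 0 :=
    le_zero_of_birthday_lt_one (h.trans_le hb)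
  rcases isEmpty_or_nonempty G.LeftMoves with hL | ⟨⟨i⟩⟩
  · exact .inl (le_zero_of_isEmpty_leftMoves hL)
  · obtain ⟨j⟩ := hG.nonempty_rightMoves i
    have hG_le_star : G ≤ star := le_iff_forall_lf.2
      ⟨fun i => lf_of_le_moveLeft (i := PUnit.unit) (hopt (birthday_moveLeft_lt i)),
        fun _ => lf_of_moveRight_le (hopt (birthday_moveRight_lt j))⟩
    exact .inr (hG_le_star.trans (Game.mk_le_mk.1 (zero_add (⟦PGame.star⟧ : Game)).ge))

theorem UpBounded.lf_copies_succ {n : ℕ} {X : PGame} (h : UpBounded n X) :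
    X ⧏ copies (n + 1) upG ∧ X ⧏ copies (n + 1) upG + star := by
  unfold UpBounded at h
  simp only [LF, ← Game.mk_le_mk, Game.mk_add, Game.mk_copies, succ_nsmul] at h ⊢
  rcases h with h | h <;> refine ⟨fun h' => ?_, fun h' => ?_⟩
  · exact Game.not_up_le_zero (by simpa using h'.trans h)
  · exact Game.not_up_add_star_le_zero (by simpa [add_assoc] using h'.trans h)
  · exact Game.not_up_le_star (by simpa using h'.trans h)
  · exact Game.not_up_le_zero (by simpa [add_right_comm _ ⟦upG⟧] using h'.trans h)

theorem not_copies_le_and_copies_add_star_le {n : ℕ} {G : PGame} (hG : Dicotic G)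
    (hR : ∀ j, UpBounded n (G.moveRight j)) :
    ¬(copies n upG ≤ G ∧ copies n upG + star ≤ G) := by
  rintro ⟨hA, hB⟩
  rcases isEmpty_or_nonempty G.RightMoves with hR' | ⟨⟨j⟩⟩
  · have hG0 : G ≤ 0 := le_zero_of_isEmpty_leftMoves
      ⟨fun i => (hG.nonempty_rightMoves i).elim hR'.elim⟩
    exact Game.not_nsmul_up_add_star_le_zero n
      (by rw [← Game.mk_copies, ← Game.mk_add]; exact hB.trans hG0)
  · rcases hR j with h | h
    exacts [lf_moveRight_of_le hA j h, lf_moveRight_of_le hB j h]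

theorem copies_add_star_le_copies_succ_moveRight (n : ℕ)
    (j : (copies (n + 1) upG).RightMoves) :
    copies n upG + star ≤ (copies (n + 1) upG).moveRight j :=
  Game.mk_le_mk.1 (by rw [Game.mk_copies_succ_upG_moveRight, Game.mk_add, Game.mk_copies])

theorem copies_le_copies_succ_add_star_moveRight (n : ℕ) :
    ∀ j, copies n upG ≤ (copies (n + 1) upG + star).moveRight j := by
  refine (forall_moveRight_add (copies n upG ≤ ·)).2 ⟨fun i => Game.mk_le_mk.1 ?_, fun _ => ?_⟩
  · rw [Game.mk_add, Game.mk_copies_succ_upG_moveRight, add_assoc, Game.star_add_star, add_zero,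
      Game.mk_copies]
  · show (⟦copies n upG⟧ : Game) ≤ ⟦copies (n + 1) upG⟧ + 0
    rw [add_zero, Game.mk_copies, Game.mk_copies, succ_nsmul]
    exact le_add_of_nonneg_right Game.zero_le_up

theorem upBounded_succ {n : ℕ} {G : PGame} (hG : Dicotic G)
    (hL : ∀ i, UpBounded n (G.moveLeft i)) (hR : ∀ j, UpBounded n (G.moveRight j)) :
    UpBounded (n + 1) G := by
  by_cases hA : copies n upG ≤ G
  · refine .inl (le_iff_forall_lf.2 ⟨fun i => (hL i).lf_copies_succ.1, fun j hj => ?_⟩)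
    exact not_copies_le_and_copies_add_star_le hG hR
      ⟨hA, (copies_add_star_le_copies_succ_moveRight n j).trans hj⟩
  · exact .inr (le_iff_forall_lf.2 ⟨fun i => (hL i).lf_copies_succ.2,
      fun j hj => hA ((copies_le_copies_succ_add_star_moveRight n j).trans hj)⟩)

theorem stmt6 : ∀ (G : PGame) (n : ℕ), Dicotic G → G.birthday ≤ (n : Ordinal) + 1 →
    G ≤ copies n upG ∨ G ≤ copies n upG + star := by
  intro G n hG hb
  induction n generalizing G with
  | zero => exact upBounded_zero_of_birthday_le_one hG (by simpa using hb)
  | succ n ih =>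
    have hopt {X : PGame} (h : X.birthday < G.birthday) : X.birthday ≤ n + 1 := by
      simpa using Order.lt_add_one_iff.1 (h.trans_le hb)
    exact upBounded_succ hG (fun i => ih _ (hG.moveLeft i) (hopt (birthday_moveLeft_lt i)))
      (fun j => ih _ (hG.moveRight j) (hopt (birthday_moveRight_lt j)))
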